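/- Let ω = (1,1,1,1,1,1,1,1,1,6) ∈ ℤ¹⁰ (all nine triangle entries equal to 1 and level 6). Then the intrinsic (relative) interior of the cone C satisfies: relint(C) ∩ ℤ¹⁰ = {ω + u : u ∈ C ∩ ℤ¹⁰}. (This is the combinatorial Gorenstein property of the trinode conformal-block cone, with canonical generator in level 6.) -/

import Mathlib

/-!
Within the subspace cut out by two linear relations, `C` is defined by twelve integral
inequalities: the nine coordinates are nonnegative and the level dominates three sums of five
coordinates. Each of these twelve facet functionals takes the value exactly `1` at `ω`, which lies
in the subspace. Since `ω` satisfies every inequality strictly, the relative interior of `C` is the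
locus where all twelve hold strictly, and for a lattice point `x` this means that every facet
functional is `≥ 1` at `x`, i.e. `≥ 0` at `x - ω`.
-/

/-- The nine generators `g_X, g_S, g_T, g₁₂, g₂₃, g₃₁, g₂₁, g₃₂, g₁₃` of the
trinode cone in `ℤ¹⁰ = ℤ⁹ × ℤ` (first nine coordinates ordered
`(a₁,b₁,c₁,a₂,a₃,b₂,b₃,c₂,c₃)`, last coordinate the level). -/
def cbGens : Fin 9 → Fin 10 → ℤ :=
  ![![0, 0, 0, 0, 0, 0, 0, 0, 0, 1],  -- g_X
    ![0, 0, 0, 1, 0, 1, 0, 1, 0, 1],  -- g_S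
    ![0, 0, 0, 0, 1, 0, 1, 0, 1, 1],  -- g_T
    ![0, 0, 0, 1, 0, 0, 1, 0, 0, 1],  -- g₁₂
    ![0, 0, 0, 0, 0, 1, 0, 0, 1, 1],  -- g₂₃
    ![0, 0, 0, 0, 1, 0, 0, 1, 0, 1],  -- g₃₁
    ![0, 1, 0, 0, 0, 0, 0, 0, 0, 1],  -- g₂₁
    ![0, 0, 1, 0, 0, 0, 0, 0, 0, 1],  -- g₃₂
    ![1, 0, 0, 0, 0, 0, 0, 0, 0, 1]]  -- g₁₃

/-- The real versions of the nine generators. -/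
noncomputable def cbGensR (i : Fin 9) : Fin 10 → ℝ := fun t => (cbGens i t : ℝ)

/-- The polyhedral cone `C ⊆ ℝ¹⁰` generated by the nine vectors. -/
def coneC : Set (Fin 10 → ℝ) :=
  {y | ∃ c : Fin 9 → ℝ, (∀ i, 0 ≤ c i) ∧ y = ∑ i : Fin 9, c i • cbGensR i}

/-- `ω = (1,1,1,1,1,1,1,1,1,6)`. -/
def omegaCB : Fin 10 → ℤ := ![1, 1, 1, 1, 1, 1, 1, 1, 1, 6]

open Filter Topology

section IntrinsicInterior

theorem mem_intrinsicInterior_of_isOpen {𝕜 V P : Type*} [Ring 𝕜] [AddCommGroup V] [Module 𝕜 V]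
    [TopologicalSpace P] [AddTorsor V P] {s U : Set P} {x : P} (hU : IsOpen U)
    (hUs : U ∩ affineSpan 𝕜 s ⊆ s) (hxs : x ∈ s) (hxU : x ∈ U) :
    x ∈ intrinsicInterior 𝕜 s :=
  ⟨⟨x, subset_affineSpan 𝕜 s hxs⟩,
    mem_interior.2 ⟨Subtype.val ⁻¹' U, fun z hz => hUs ⟨hz, z.2⟩,
      hU.preimage continuous_subtype_val, hxU⟩, rfl⟩

variable {E : Type*} [AddCommGroup E] [Module ℝ E] [TopologicalSpace E]
  [IsTopologicalAddGroup E] [ContinuousSMul ℝ E]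

theorem pos_of_mem_intrinsicInterior {s : Set E} {ℓ : E →ₗ[ℝ] ℝ} (hs : ∀ y ∈ s, 0 ≤ ℓ y)
    {p x : E} (hp : p ∈ s) (hℓp : 0 < ℓ p) (hx : x ∈ intrinsicInterior ℝ s) : 0 < ℓ x := by
  obtain ⟨y, hy, rfl⟩ := hx
  -- Extending the segment from `p` through `x` slightly beyond `x` stays in `s`, and there
  -- `ℓ < 0` if `ℓ x = 0`.
  let γ : ℝ → affineSpan ℝ s := fun c =>
    ⟨AffineMap.lineMap p (y : E) c, AffineMap.lineMap_mem c (subset_affineSpan ℝ s hp) y.2⟩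
  have hγ1 : γ 1 = y := Subtype.ext (AffineMap.lineMap_apply_one _ _)
  have hγ : Tendsto γ (𝓝 1) (𝓝 y) :=
    hγ1 ▸ (AffineMap.lineMap_continuous.subtype_mk _).tendsto 1
  have hnear : ∀ᶠ c in 𝓝[>] (1 : ℝ), γ c ∈ interior (Subtype.val ⁻¹' s) :=
    nhdsWithin_le_nhds (hγ (isOpen_interior.mem_nhds hy))
  obtain ⟨c, hc, hc1⟩ := (hnear.and self_mem_nhdsWithin).exists
  have hγc : 0 ≤ (1 - c) * ℓ p + c * ℓ y := by
    simpa [γ, AffineMap.lineMap_apply_module] using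
      hs _ (interior_subset (s := Subtype.val ⁻¹' s) hc)
  by_contra! hy0
  nlinarith

theorem intrinsicInterior_setOf_mem_and_nonneg {ι : Type*} [Finite ι] (L : Submodule ℝ E)
    (ℓ : ι → E →L[ℝ] ℝ) {p : E} (hpL : p ∈ L) (hp : ∀ j, 0 < ℓ j p) :
    intrinsicInterior ℝ {x | x ∈ L ∧ ∀ j, 0 ≤ ℓ j x} = {x | x ∈ L ∧ ∀ j, 0 < ℓ j x} := by
  set s := {x | x ∈ L ∧ ∀ j, 0 ≤ ℓ j x}
  have hps : p ∈ s := ⟨hpL, fun j => (hp j).le⟩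
  ext x
  refine ⟨fun hx => ⟨(intrinsicInterior_subset hx).1, fun j =>
    pos_of_mem_intrinsicInterior (ℓ := (ℓ j : E →ₗ[ℝ] ℝ)) (fun y hy => hy.2 j) hps (hp j) hx⟩, ?_⟩
  rintro ⟨hxL, hxℓ⟩
  have hspan : (affineSpan ℝ s : Set E) ⊆ L :=
    affineSpan_le (Q := L.toAffineSubspace).2 fun y hy => hy.1
  refine mem_intrinsicInterior_of_isOpen (U := {x | ∀ j, 0 < ℓ j x}) ?_ ?_
    ⟨hxL, fun j => (hxℓ j).le⟩ hxℓ
  · simp only [Set.ofPred_forall]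
    exact isOpen_iInter_of_finite fun j => isOpen_lt continuous_const (ℓ j).continuous
  · rintro y ⟨hyℓ, hy⟩
    exact ⟨hspan hy, fun j => (hyℓ j).le⟩

end IntrinsicInterior

noncomputable def dotCLM {n : Type*} [Fintype n] (v : n → ℤ) : (n → ℝ) →L[ℝ] ℝ :=
  ∑ t, (v t : ℝ) • ContinuousLinearMap.proj t

theorem dotCLM_apply {n : Type*} [Fintype n] (v : n → ℤ) (x : n → ℝ) :
    dotCLM v x = ∑ t, (v t : ℝ) * x t := by
  simp [dotCLM]

theorem dotCLM_intCast {n : Type*} [Fintype n] (v w : n → ℤ) :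
    dotCLM v (fun t => (w t : ℝ)) = ((v ⬝ᵥ w : ℤ) : ℝ) := by
  simp [dotCLM_apply, dotProduct]

namespace CBTrinode

def relations : Fin 2 → Fin 10 → ℤ :=
  ![![0, 0, 0, 1, 0, -1, -1, 0, 1, 0],   -- a₂ + c₃ = b₂ + b₃
    ![0, 0, 0, 0, 1, 1, 0, -1, -1, 0]]   -- a₃ + b₂ = c₂ + c₃

def facets : Fin 12 → Fin 10 → ℤ :=
  ![![1, 0, 0, 0, 0, 0, 0, 0, 0, 0],
    ![0, 1, 0, 0, 0, 0, 0, 0, 0, 0],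
    ![0, 0, 1, 0, 0, 0, 0, 0, 0, 0],
    ![0, 0, 0, 1, 0, 0, 0, 0, 0, 0],
    ![0, 0, 0, 0, 1, 0, 0, 0, 0, 0],
    ![0, 0, 0, 0, 0, 1, 0, 0, 0, 0],
    ![0, 0, 0, 0, 0, 0, 1, 0, 0, 0],
    ![0, 0, 0, 0, 0, 0, 0, 1, 0, 0],
    ![0, 0, 0, 0, 0, 0, 0, 0, 1, 0],
    ![-1, -1, -1, -1, 0, 0, 0, 0, -1, 1],   -- a₁ + b₁ + c₁ + a₂ + c₃ ≤ level
    ![-1, -1, -1, 0, -1, -1, 0, 0, 0, 1],   -- a₁ + b₁ + c₁ + a₃ + b₂ ≤ level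
    ![-1, -1, -1, 0, 0, 0, -1, -1, 0, 1]]   -- a₁ + b₁ + c₁ + b₃ + c₂ ≤ level

theorem relations_dotProduct_cbGens : ∀ k i, relations k ⬝ᵥ cbGens i = 0 := by decide
theorem facets_dotProduct_cbGens_nonneg : ∀ j i, 0 ≤ facets j ⬝ᵥ cbGens i := by decide
theorem relations_dotProduct_omegaCB : ∀ k, relations k ⬝ᵥ omegaCB = 0 := by decide
theorem facets_dotProduct_omegaCB : ∀ j, facets j ⬝ᵥ omegaCB = 1 := by decide

theorem dotCLM_cbGensR (v : Fin 10 → ℤ) (i : Fin 9) :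
    dotCLM v (cbGensR i) = ((v ⬝ᵥ cbGens i : ℤ) : ℝ) :=
  dotCLM_intCast v (cbGens i)

noncomputable def kerRelations : Submodule ℝ (Fin 10 → ℝ) :=
  ⨅ k, LinearMap.ker (dotCLM (relations k) : (Fin 10 → ℝ) →ₗ[ℝ] ℝ)

theorem coneC_eq : coneC = {x | x ∈ kerRelations ∧ ∀ j, 0 ≤ dotCLM (facets j) x} := by
  ext x
  constructor
  · rintro ⟨c, hc, rfl⟩
    refine ⟨kerRelations.sum_mem fun i _ => kerRelations.smul_mem _ ?_, fun j => ?_⟩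
    · refine Submodule.mem_iInf _ |>.2 fun k => ?_
      rw [LinearMap.mem_ker, ContinuousLinearMap.coe_coe, dotCLM_cbGensR,
        relations_dotProduct_cbGens, Int.cast_zero]
    · rw [map_sum]
      refine Finset.sum_nonneg fun i _ => ?_
      rw [map_smul, smul_eq_mul, dotCLM_cbGensR]
      exact mul_nonneg (hc i) (Int.cast_nonneg (facets_dotProduct_cbGens_nonneg j i))
  · rintro ⟨hker, hfacets⟩
    simp [kerRelations, Submodule.mem_iInf, dotCLM_apply, Fin.forall_fin_succ, Fin.sum_univ_succ,
      relations] at hker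
    simp [dotCLM_apply, Fin.forall_fin_succ, Fin.sum_univ_succ, facets] at hfacets
    obtain ⟨hrel₁, hrel₂⟩ := hker
    obtain ⟨h0, h1, h2, h3, h4, h5, h6, h7, h8, hA, hB, hC⟩ := hfacets
    -- Greedy decomposition: the coefficient of `g_T` is `t = min a₃ b₃ c₃`.
    obtain ⟨t, ht0, ht4, ht6, ht8, ht⟩ : ∃ t, 0 ≤ t ∧ t ≤ x 4 ∧ t ≤ x 6 ∧ t ≤ x 8 ∧
        (t = x 4 ∨ t = x 6 ∨ t = x 8) :=
      ⟨min (x 4) (min (x 6) (x 8)), by grind⟩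
    have hS : 0 ≤ x 7 - x 4 + t := by rcases ht with rfl | rfl | rfl <;> linarith
    have hX : 0 ≤ x 9 - x 0 - x 1 - x 2 - x 6 - x 7 - x 8 + t := by
      rcases ht with rfl | rfl | rfl <;> linarith
    refine ⟨![x 9 - x 0 - x 1 - x 2 - x 6 - x 7 - x 8 + t, x 7 - x 4 + t, t, x 6 - t, x 8 - t,
      x 4 - t, x 1, x 2, x 0], ?_, ?_⟩
    · intro i
      fin_cases i <;> simp <;> linarith
    · funext s
      fin_cases s <;> simp [Fin.sum_univ_succ, cbGensR, cbGens] <;> linarith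

theorem intCast_mem_kerRelations_iff (w : Fin 10 → ℤ) :
    (fun t => (w t : ℝ)) ∈ kerRelations ↔ ∀ k, relations k ⬝ᵥ w = 0 := by
  simp only [kerRelations, Submodule.mem_iInf, LinearMap.mem_ker, ContinuousLinearMap.coe_coe,
    dotCLM_intCast, Int.cast_eq_zero]

theorem intCast_mem_coneC_iff (w : Fin 10 → ℤ) :
    (fun t => (w t : ℝ)) ∈ coneC ↔ (∀ k, relations k ⬝ᵥ w = 0) ∧ ∀ j, 0 ≤ facets j ⬝ᵥ w := by
  simp only [coneC_eq, Set.mem_ofPred_eq, intCast_mem_kerRelations_iff, dotCLM_intCast,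
    Int.cast_nonneg_iff]

theorem intCast_mem_intrinsicInterior_coneC_iff (w : Fin 10 → ℤ) :
    (fun t => (w t : ℝ)) ∈ intrinsicInterior ℝ coneC ↔
      (∀ k, relations k ⬝ᵥ w = 0) ∧ ∀ j, 0 < facets j ⬝ᵥ w := by
  have hω : (fun t => (omegaCB t : ℝ)) ∈ kerRelations :=
    (intCast_mem_kerRelations_iff _).2 relations_dotProduct_omegaCB
  have hωpos (j : Fin 12) : 0 < dotCLM (facets j) (fun t => (omegaCB t : ℝ)) := by
    rw [dotCLM_intCast, facets_dotProduct_omegaCB, Int.cast_one]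
    exact one_pos
  rw [coneC_eq, intrinsicInterior_setOf_mem_and_nonneg kerRelations _ hω hωpos]
  simp only [Set.mem_ofPred_eq, intCast_mem_kerRelations_iff, dotCLM_intCast, Int.cast_pos]

end CBTrinode

open CBTrinode in
theorem stmt_9 (x : Fin 10 → ℤ) :
    ((fun t => (x t : ℝ)) ∈ intrinsicInterior ℝ coneC) ↔
      ∃ u : Fin 10 → ℤ, ((fun t => (u t : ℝ)) ∈ coneC) ∧ x = omegaCB + u := by
  rw [intCast_mem_intrinsicInterior_coneC_iff]
  constructor
  · rintro ⟨hrel, hfacet⟩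
    refine ⟨x - omegaCB, (intCast_mem_coneC_iff _).2 ⟨fun k => ?_, fun j => ?_⟩, by abel⟩
    · rw [dotProduct_sub, hrel, relations_dotProduct_omegaCB, sub_zero]
    · rw [dotProduct_sub, facets_dotProduct_omegaCB]
      linarith [hfacet j]
  · rintro ⟨u, hu, rfl⟩
    obtain ⟨hrel, hfacet⟩ := (intCast_mem_coneC_iff u).1 hu
    refine ⟨fun k => ?_, fun j => ?_⟩
    · rw [dotProduct_add, hrel, relations_dotProduct_omegaCB, add_zero]
    · rw [dotProduct_add, facets_dotProduct_omegaCB]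
      linarith [hfacet j]
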